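/- In the two-sided bipartite market with symmetric utilities given by: u_{1,4}=w_{4,1}=1, u_{2,4}=w_{4,2}=2, u_{2,5}=w_{5,2}=1, u_{2,6}=w_{6,2}=1, and all other utilities 0, no fractional perfect matching is simultaneously envy-free and Pareto-optimal. -/

import Mathlib

def isPM {n : ℕ} (x : Fin n → Fin n → ℝ) : Prop :=
  (∀ i j, 0 ≤ x i j) ∧ (∀ i, ∑ j, x i j = 1) ∧ (∀ j, ∑ i, x i j = 1)

/-- Utility of agent `i ∈ A` in a two-sided market: `u i · x i`. -/
def utilA {n : ℕ} (u x : Fin n → Fin n → ℝ) (i : Fin n) : ℝ := ∑ j, u i j * x i j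

/-- Utility of agent `j ∈ B`: `w j · x_j = Σ_i w j i * x i j`. -/
def utilB {n : ℕ} (w : Fin n → Fin n → ℝ) (x : Fin n → Fin n → ℝ) (j : Fin n) : ℝ :=
  ∑ i, w j i * x i j

/-- Two-sided envy-freeness: no agent on either side prefers the bundle of another
agent on their own side. -/
def EnvyFree2 {n : ℕ} (u w x : Fin n → Fin n → ℝ) : Prop :=
  (∀ i i' : Fin n, ∑ j, u i j * x i' j ≤ utilA u x i) ∧
  (∀ j j' : Fin n, ∑ i, w j i * x i j' ≤ utilB w x j)

/-- Two-sided Pareto-optimality over fractional perfect matchings. -/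
def ParetoOptimal2 {n : ℕ} (u w x : Fin n → Fin n → ℝ) : Prop :=
  ¬ ∃ y, isPM y ∧
    (∀ i, utilA u x i ≤ utilA u y i) ∧ (∀ j, utilB w x j ≤ utilB w y j) ∧
    ((∃ i, utilA u x i < utilA u y i) ∨ (∃ j, utilB w x j < utilB w y j))

/-- Symmetric utilities (A = {1,2,3} ↦ {0,1,2}, B = {4,5,6} ↦ {0,1,2}):
u_{1,4} = 1, u_{2,4} = 2, u_{2,5} = u_{2,6} = 1, all other utilities 0. -/
def u14 : Fin 3 → Fin 3 → ℝ := ![![1, 0, 0], ![2, 1, 1], ![0, 0, 0]]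

/-- Side B's utilities are symmetric: w j i = u i j. -/
def w14 : Fin 3 → Fin 3 → ℝ := fun j i => u14 i j

/-! Envy-freeness forces `x 0 0 = x 1 0 = x 1 1 = x 1 2 = 1/3`: agents `0` and `1` of side A
compare their bundles both ways (the row sums turn `1`'s comparison into `x 0 0 ≤ x 1 0`),
agent `1` of side B wants at least as much of A's agent `1` as the others get, and column `0`
sums to `1`. Such a matching gives `2/3` of item `0` of side A to zero-utility partners;
moving `1/3` of it onto `x 0 0` helps agent `0` on both sides and hurts nobody. -/

section Utilities

variable (v : Fin 3 → ℝ)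

@[simp] lemma sum_u14_zero_mul : ∑ j, u14 0 j * v j = v 0 := by simp [u14, Fin.sum_univ_three]

@[simp] lemma sum_u14_one_mul : ∑ j, u14 1 j * v j = 2 * v 0 + v 1 + v 2 := by
  simp [u14, Fin.sum_univ_three]

@[simp] lemma sum_u14_two_mul : ∑ j, u14 2 j * v j = 0 := by simp [u14, Fin.sum_univ_three]

@[simp] lemma sum_w14_zero_mul : ∑ i, w14 0 i * v i = v 0 + 2 * v 1 := by
  simp [w14, u14, Fin.sum_univ_three]

@[simp] lemma sum_w14_one_mul : ∑ i, w14 1 i * v i = v 1 := by simp [w14, u14, Fin.sum_univ_three]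

@[simp] lemma sum_w14_two_mul : ∑ i, w14 2 i * v i = v 1 := by simp [w14, u14, Fin.sum_univ_three]

end Utilities

lemma EnvyFree2.u14_entries {x : Fin 3 → Fin 3 → ℝ} (hx : isPM x) (hef : EnvyFree2 u14 w14 x) :
    x 0 0 = 1 / 3 ∧ x 1 0 = 1 / 3 ∧ x 1 1 = 1 / 3 ∧ x 1 2 = 1 / 3 := by
  obtain ⟨-, hrow, hcol⟩ := hx
  obtain ⟨efA, efB⟩ := hef
  have row0 := hrow 0
  have row1 := hrow 1
  have col0 := hcol 0
  have a01 := efA 0 1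
  have a02 := efA 0 2
  have a10 := efA 1 0
  have b10 := efB 1 0
  have b12 := efB 1 2
  have b21 := efB 2 1
  rw [Fin.sum_univ_three] at row0 row1 col0
  simp only [utilA, utilB, sum_u14_zero_mul, sum_u14_one_mul, sum_w14_one_mul, sum_w14_two_mul]
    at a01 a02 a10 b10 b12 b21
  refine ⟨?_, ?_, ?_, ?_⟩ <;> linarith

noncomputable def y14 : Fin 3 → Fin 3 → ℝ :=
  ![![2 / 3, 1 / 6, 1 / 6], ![1 / 3, 1 / 3, 1 / 3], ![0, 1 / 2, 1 / 2]]

lemma isPM_y14 : isPM y14 := by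
  refine ⟨?_, ?_, ?_⟩ <;> norm_num [Fin.forall_fin_succ, Fin.sum_univ_three, y14, Matrix.cons_val_two]

/-- in this symmetric two-sided {0,1,2} instance, no fractional
perfect matching is simultaneously envy-free and Pareto-optimal. -/
theorem no_efpo_symmetric :
    ¬ ∃ x : Fin 3 → Fin 3 → ℝ, isPM x ∧ EnvyFree2 u14 w14 x ∧ ParetoOptimal2 u14 w14 x := by
  rintro ⟨x, hx, hef, hpo⟩
  obtain ⟨h00, h10, h11, h12⟩ := hef.u14_entries hx
  refine hpo ⟨y14, isPM_y14, ?_, ?_, Or.inl ⟨0, ?_⟩⟩ <;>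
    norm_num [Fin.forall_fin_succ, utilA, utilB, y14, Matrix.cons_val_two, h00, h10, h11, h12]
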